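/- Write f(x) = x·exp(Σ_{i≥2} b_i x^i) with formal coefficients b_i, and let D(t) = 4f(-t)(2f'(t)² - f⁽³⁾(0)f(t)² - f(t)f''(t)) + 8f(t). Then the coefficient of t^j in D(t) vanishes for j < 6, and for j ≥ 6 it depends linearly on b_{j-1} with nonzero coefficient; in particular d₆ = -8(6b₂b₃ - 5b₅) and d₇ = -(4/3)(8b₂³ + 24b₂b₄ + 27b₃² - 42b₆). Hence D(t)=0 determines b_j for j ≥ 5 as polynomials in b₂, b₃, b₄; e.g. b₅ = (6/5)b₂b₃, b₆ = (1/42)(8b₂³ + 24b₂b₄ + 27b₃²), b₇ = (6/7)b₃(b₂² + b₄), b₈ = (1/21)(b₂⁴ + 10b₂²b₄ + 27b₂b₃² + 7b₄²). -/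

import Mathlib

/-!
STATEMENT 14: For `f(x) = x·exp(∑_{i≥2} b_i x^i)` (the `b`'s generic, over a
commutative ℚ-algebra) and
`D(t) = 4f(-t)(2f'(t)² - f⁽³⁾(0)f(t)² - f(t)f''(t)) + 8f(t)`:
the `t^j`-coefficient `d_j` of `D` vanishes for `j < 6` (indeed `j ≤ 5`); for `j ≥ 6` it
depends linearly on `b_{j-1}` with nonzero coefficient; explicitly
`d₆ = -8(6b₂b₃ - 5b₅)`, `d₇ = -(4/3)(8b₂³ + 24b₂b₄ + 27b₃² - 42b₆)`;
and `D = 0` forces `b₅ = (6/5)b₂b₃`, `b₆ = (1/42)(8b₂³+24b₂b₄+27b₃²)`,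
`b₇ = (6/7)b₃(b₂²+b₄)`, `b₈ = (1/21)(b₂⁴+10b₂²b₄+27b₂b₃²+7b₄²)`.
The exponential is encoded by its defining ODE; `f⁽³⁾(0) = 3!·coeff 3 f`.
-/

/-- `k`-th formal derivative of a power series. -/
noncomputable def Dn {R : Type*} [CommRing R] (k : ℕ) (f : PowerSeries R) : PowerSeries R :=
  (PowerSeries.derivativeFun (R := R))^[k] f

/-- `D = 4f(-t)(2f'² - f⁽³⁾(0)f² - f·f'') + 8f`. -/
noncomputable def DAt {R : Type*} [CommRing R] (f : PowerSeries R) : PowerSeries R :=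
  4 * PowerSeries.rescale (-1) f
      * (2 * (Dn 1 f) ^ 2 - PowerSeries.C (6 * PowerSeries.coeff 3 f) * f ^ 2
          - f * Dn 2 f)
    + 8 * f

open PowerSeries Finset

-- two-point / one-point supported sums
private theorem range_sum_eq_pair {M : Type*} [AddCommMonoid M] (n a c : ℕ) (F : ℕ → M) (x y : M)
    (hac : a ≠ c) (ha : a < n) (hc : c < n) (hFa : F a = x) (hFc : F c = y)
    (h0 : ∀ i, i < n → i ≠ a → i ≠ c → F i = 0) :
    ∑ i ∈ Finset.range n, F i = x + y := by
  have step : ∀ i ∈ Finset.range n, F i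
      = (if i = a then x else 0) + (if i = c then y else 0) := by
    intro i hi
    rw [Finset.mem_range] at hi
    by_cases h1 : i = a
    · subst h1; rw [if_pos rfl, if_neg hac, add_zero, hFa]
    · by_cases h2 : i = c
      · subst h2; rw [if_neg h1, if_pos rfl, zero_add, hFc]
      · rw [if_neg h1, if_neg h2, add_zero, h0 i hi h1 h2]
  rw [Finset.sum_congr rfl step, Finset.sum_add_distrib,
    Finset.sum_ite_eq' (Finset.range n) a, Finset.sum_ite_eq' (Finset.range n) c,
    if_pos (Finset.mem_range.2 ha), if_pos (Finset.mem_range.2 hc)]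

private theorem range_sum_eq_single {M : Type*} [AddCommMonoid M] (n a : ℕ) (F : ℕ → M) (x : M)
    (ha : a < n) (hFa : F a = x)
    (h0 : ∀ i, i < n → i ≠ a → F i = 0) :
    ∑ i ∈ Finset.range n, F i = x := by
  have step : ∀ i ∈ Finset.range n, F i = (if i = a then x else 0) := by
    intro i hi
    rw [Finset.mem_range] at hi
    by_cases h1 : i = a
    · subst h1; rw [if_pos rfl, hFa]
    · rw [if_neg h1, h0 i hi h1]
  rw [Finset.sum_congr rfl step, Finset.sum_ite_eq' (Finset.range n) a,
    if_pos (Finset.mem_range.2 ha)]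

theorem qcancel {A : Type*} [CommRing A] [Algebra ℚ A] (n : ℚ) (hn : n ≠ 0) {x y : A}
    (h : algebraMap ℚ A n * x = algebraMap ℚ A n * y) : x = y := by
  have h2 := congrArg (fun z => (n⁻¹ : ℚ) • z) h
  simpa [Algebra.smul_def, ← mul_assoc, ← map_mul, inv_mul_cancel₀ hn] using h2

theorem qsolve {A : Type*} [CommRing A] [Algebra ℚ A] (n m q : ℚ) (hn : n ≠ 0)
    (hq : n * q = m) {x y : A}
    (h : algebraMap ℚ A n * x = algebraMap ℚ A m * y) : x = q • y := by
  refine qcancel n hn ?_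
  rw [h, Algebra.smul_def, ← mul_assoc, ← map_mul, hq]

theorem succ_cancel {A : Type*} [CommRing A] [Algebra ℚ A] (k : ℕ) {x y : A}
    (h : x * ((k : A) + 1) = y * ((k : A) + 1)) : x = y := by
  refine qcancel ((k:ℚ)+1) (by positivity) ?_
  have hcast : algebraMap ℚ A ((k:ℚ)+1) = (k:A)+1 := by
    simp [map_add, map_natCast]
  rw [hcast]
  linear_combination h

noncomputable def S1 {A : Type*} [CommRing A] (f : PowerSeries A) (q : ℕ) : A :=
  ∑ ik ∈ Finset.HasAntidiagonal.antidiagonal q,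
    (coeff (ik.1+1) f * ((ik.1 : A)+1)) * (coeff (ik.2+1) f * ((ik.2 : A)+1))
noncomputable def S2 {A : Type*} [CommRing A] (f : PowerSeries A) (q : ℕ) : A :=
  ∑ ik ∈ Finset.HasAntidiagonal.antidiagonal q, coeff ik.1 f * coeff ik.2 f
noncomputable def S3 {A : Type*} [CommRing A] (f : PowerSeries A) (q : ℕ) : A :=
  ∑ ik ∈ Finset.HasAntidiagonal.antidiagonal q,
    coeff ik.1 f * (coeff (ik.2+1+1) f * ((ik.2 : A)+1+1) * ((ik.2 : A)+1))

theorem coeff_derivativeFun' {A : Type*} [CommRing A] (f : PowerSeries A) (n : ℕ) :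
    coeff n (derivativeFun f) = coeff (n + 1) f * (n + 1) := coeff_derivative f n

theorem coeff_DAt {A : Type*} [CommRing A] (f : PowerSeries A) (j : ℕ) :
    coeff j (DAt f) =
      4 * ∑ pq ∈ Finset.HasAntidiagonal.antidiagonal j,
        ((-1:A)^pq.1 * coeff pq.1 f) *
          (2 * S1 f pq.2 - 6 * coeff 3 f * S2 f pq.2 - S3 f pq.2)
      + 8 * coeff j f := by
  have hD : DAt f = (4:A) • (rescale (-1) f * ((2:A) • (derivativeFun f * derivativeFun f)
      - C (6 * coeff 3 f) * (f*f) - f * derivativeFun (derivativeFun f))) + (8:A) • f := by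
    rw [DAt]
    simp only [Dn, Function.iterate_one, Function.iterate_succ, Function.iterate_zero,
      Function.comp_apply, id_eq, smul_eq_C_mul, map_ofNat]
    ring
  rw [hD, map_add, map_smul, map_smul, smul_eq_mul, smul_eq_mul, coeff_mul]
  congr 1
  congr 1
  apply Finset.sum_congr rfl
  intro pq _
  rw [coeff_rescale, map_sub, map_sub, map_smul, smul_eq_mul, coeff_C_mul,
    coeff_mul, coeff_mul, coeff_mul]
  have h1 : ∑ ik ∈ Finset.HasAntidiagonal.antidiagonal pq.2,
      coeff ik.1 (derivativeFun f) * coeff ik.2 (derivativeFun f) = S1 f pq.2 := by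
    apply Finset.sum_congr rfl
    intro ik _
    rw [coeff_derivativeFun', coeff_derivativeFun']
  have h3 : ∑ ik ∈ Finset.HasAntidiagonal.antidiagonal pq.2,
      coeff ik.1 f * coeff ik.2 (derivativeFun (derivativeFun f)) = S3 f pq.2 := by
    apply Finset.sum_congr rfl
    intro ik _
    rw [coeff_derivativeFun', coeff_derivativeFun']
    push_cast
    ring
  rw [h1, h3, S2]

theorem Ecoeff_rec {A : Type*} [CommRing A] (b : ℕ → A) (E : PowerSeries A)
    (hE : PowerSeries.derivativeFun E =
      PowerSeries.derivativeFun (PowerSeries.mk fun n => if 2 ≤ n then b n else 0) * E)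
    (n : ℕ) :
    coeff (n+1) E * ((n : A)+1) =
      ∑ i ∈ Finset.range (n+1),
        ((if 2 ≤ i+1 then b (i+1) else 0) * ((i : A)+1)) * coeff (n-i) E := by
  have h := congrArg (coeff n) hE
  rw [coeff_derivativeFun', coeff_mul,
    Finset.Nat.sum_antidiagonal_eq_sum_range_succ_mk] at h
  rw [h]
  apply Finset.sum_congr rfl
  intro i _
  rw [coeff_derivativeFun', coeff_mk]

theorem coeff_DAt_congr {A : Type*} [CommRing A] (g h : PowerSeries A) (j : ℕ)
    (hj : 3 ≤ j) (h0 : coeff 0 g = 0)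
    (hag : ∀ k, k ≤ j → coeff k g = coeff k h) :
    coeff j (DAt g) = coeff j (DAt h) := by
  have h0' : coeff 0 h = 0 := by rw [← hag 0 (by omega)]; exact h0
  rw [coeff_DAt, coeff_DAt, hag j le_rfl]
  congr 2
  apply Finset.sum_congr rfl
  intro pq hpq
  rw [Finset.HasAntidiagonal.mem_antidiagonal] at hpq
  by_cases hp : pq.1 = 0
  · rw [hp, h0, h0']
    ring
  · have hq : pq.2 + 1 ≤ j := by omega
    have e1 : S1 g pq.2 = S1 h pq.2 := by
      rw [S1, S1]
      apply Finset.sum_congr rfl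
      intro ik hik
      rw [Finset.HasAntidiagonal.mem_antidiagonal] at hik
      rw [hag (ik.1+1) (by omega), hag (ik.2+1) (by omega)]
    have e2 : S2 g pq.2 = S2 h pq.2 := by
      rw [S2, S2]
      apply Finset.sum_congr rfl
      intro ik hik
      rw [Finset.HasAntidiagonal.mem_antidiagonal] at hik
      rw [hag ik.1 (by omega), hag ik.2 (by omega)]
    have e3 : S3 g pq.2 = S3 h pq.2 := by
      rw [S3, S3]
      apply Finset.sum_congr rfl
      intro ik hik
      rw [Finset.HasAntidiagonal.mem_antidiagonal] at hik
      by_cases hik1 : ik.1 = 0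
      · rw [hik1, h0, h0']; ring
      · rw [hag ik.1 (by omega), hag (ik.2+1+1) (by omega)]
    rw [e1, e2, e3, hag pq.1 (by omega), hag 3 hj]

theorem coeff_DAt_sub {A : Type*} [CommRing A] (f : PowerSeries A) (d : A) (j : ℕ)
    (hj : 6 ≤ j) (h0 : coeff 0 f = 0) (h1 : coeff 1 f = 1) :
    coeff j (DAt f) - coeff j (DAt (f - PowerSeries.C d * PowerSeries.X ^ j))
      = (8*(-1:A)^j + 4*(j:A)^2 - 20*(j:A) + 8) * d := by
  set g := f - PowerSeries.C d * PowerSeries.X ^ j with hgdef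
  have hgk : ∀ k, coeff k g = coeff k f - (if k = j then d else 0) := by
    intro k
    rw [hgdef, map_sub, coeff_C_mul, coeff_X_pow, mul_ite, mul_one, mul_zero]
  have h1g : coeff 1 g = 1 := by rw [hgk, if_neg (by omega), sub_zero, h1]
  have h0g : coeff 0 g = 0 := by rw [hgk, if_neg (by omega), sub_zero, h0]
  have h3g : coeff 3 g = coeff 3 f := by rw [hgk, if_neg (by omega), sub_zero]
  -- special sums at q = j - 1
  have hS1 : S1 f (j-1) - S1 g (j-1) = d*(((j-1:ℕ):A)+1) + d*(((j-1:ℕ):A)+1) := by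
    rw [S1, S1, Finset.Nat.sum_antidiagonal_eq_sum_range_succ_mk,
      Finset.Nat.sum_antidiagonal_eq_sum_range_succ_mk,
      show (j - 1).succ = j from by omega, ← Finset.sum_sub_distrib]
    refine range_sum_eq_pair j 0 (j-1) _ _ _ (by omega) (by omega) (by omega) ?_ ?_ ?_
    · dsimp only
      rw [show j-1-0+1 = j from by omega, show j-1-0 = j-1 from by omega,
        hgk (0+1), if_neg (by omega), sub_zero, hgk j, if_pos rfl]
      norm_num [h1]
      ring
    · dsimp only
      rw [show j-1-(j-1)+1 = 1 from by omega, show j-1-(j-1) = 0 from by omega,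
        show j-1+1 = j from by omega, hgk 1, if_neg (by omega), sub_zero,
        hgk j, if_pos rfl, h1]
      push_cast [Nat.cast_sub (show 1 ≤ j by omega)]
      ring
    · intro i hi hi0 hij
      dsimp only
      rw [hgk (i+1), if_neg (by omega), sub_zero,
        hgk (j-1-i+1), if_neg (by omega), sub_zero, sub_self]
  have hS2 : S2 f (j-1) - S2 g (j-1) = 0 := by
    rw [S2, S2, Finset.Nat.sum_antidiagonal_eq_sum_range_succ_mk,
      Finset.Nat.sum_antidiagonal_eq_sum_range_succ_mk,
      show (j - 1).succ = j from by omega, ← Finset.sum_sub_distrib]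
    apply Finset.sum_eq_zero
    intro i hi
    rw [Finset.mem_range] at hi
    dsimp only
    rw [hgk i, if_neg (by omega), sub_zero, hgk (j-1-i), if_neg (by omega), sub_zero, sub_self]
  have hS3 : S3 f (j-1) - S3 g (j-1)
      = d * ((((j-2:ℕ):A)+1+1) * (((j-2:ℕ):A)+1)) := by
    rw [S3, S3, Finset.Nat.sum_antidiagonal_eq_sum_range_succ_mk,
      Finset.Nat.sum_antidiagonal_eq_sum_range_succ_mk,
      show (j - 1).succ = j from by omega, ← Finset.sum_sub_distrib]
    refine range_sum_eq_single j 1 _ _ (by omega) ?_ ?_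
    · dsimp only
      rw [show j-1-1+1+1 = j from by omega, show j-1-1 = j-2 from by omega,
        hgk 1, if_neg (by omega), sub_zero, hgk j, if_pos rfl, h1]
      ring
    · intro i hi hi1
      dsimp only
      by_cases hi0 : i = 0
      · rw [hi0, hgk 0, if_neg (by omega), sub_zero, h0]
        ring
      · rw [hgk i, if_neg (by omega), sub_zero,
          hgk (j-1-i+1+1), if_neg (by omega), sub_zero, sub_self]
  -- sums at q = 0
  have hz : Finset.HasAntidiagonal.antidiagonal 0 = {((0:ℕ),(0:ℕ))} := rfl
  have hS10f : S1 f 0 = 1 := by rw [S1, hz, Finset.sum_singleton]; norm_num [h1]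
  have hS10g : S1 g 0 = 1 := by rw [S1, hz, Finset.sum_singleton]; norm_num [h1g]
  have hS20f : S2 f 0 = 0 := by rw [S2, hz, Finset.sum_singleton, h0]; ring
  have hS20g : S2 g 0 = 0 := by rw [S2, hz, Finset.sum_singleton, h0g]; ring
  have hS30f : S3 f 0 = 0 := by rw [S3, hz, Finset.sum_singleton, h0]; ring
  have hS30g : S3 g 0 = 0 := by rw [S3, hz, Finset.sum_singleton, h0g]; ring
  -- main computation
  rw [coeff_DAt, coeff_DAt, Finset.Nat.sum_antidiagonal_eq_sum_range_succ_mk,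
    Finset.Nat.sum_antidiagonal_eq_sum_range_succ_mk]
  have key : ∀ p ∈ Finset.range (j+1),
      ((-1:A)^p * coeff p f) * (2 * S1 f (j-p) - 6 * coeff 3 f * S2 f (j-p) - S3 f (j-p))
      - ((-1:A)^p * coeff p g) * (2 * S1 g (j-p) - 6 * coeff 3 g * S2 g (j-p) - S3 g (j-p))
      = (if p = 1 then -(2*(d*(((j-1:ℕ):A)+1) + d*(((j-1:ℕ):A)+1))
            - d * ((((j-2:ℕ):A)+1+1) * (((j-2:ℕ):A)+1))) else 0)
        + (if p = j then (-1:A)^j * d * 2 else 0) := by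
    intro p hp
    rw [Finset.mem_range] at hp
    by_cases hp1 : p = 1
    · subst hp1
      rw [if_pos rfl, if_neg (by omega), add_zero, h1, h1g, h3g,
        show j - 1 = j - 1 from rfl]
      linear_combination (-2:A) * hS1 + (6 * coeff 3 f) * hS2 + hS3
    · by_cases hpj : p = j
      · rw [hpj, if_neg (show ¬(j = 1) by omega), if_pos rfl, zero_add,
          show j - j = 0 from by omega,
          hS10f, hS10g, hS20f, hS20g, hS30f, hS30g, h3g, hgk j, if_pos rfl]
        ring
      · rw [if_neg hp1, if_neg hpj, add_zero]
        by_cases hp0 : p = 0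
        · subst hp0
          rw [h0, h0g]
          ring
        · have e1 : S1 f (j-p) = S1 g (j-p) := by
            rw [S1, S1]
            apply Finset.sum_congr rfl
            intro ik hik
            rw [Finset.HasAntidiagonal.mem_antidiagonal] at hik
            rw [hgk (ik.1+1), if_neg (by omega), sub_zero,
              hgk (ik.2+1), if_neg (by omega), sub_zero]
          have e2 : S2 f (j-p) = S2 g (j-p) := by
            rw [S2, S2]
            apply Finset.sum_congr rfl
            intro ik hik
            rw [Finset.HasAntidiagonal.mem_antidiagonal] at hik
            rw [hgk ik.1, if_neg (by omega), sub_zero,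
              hgk ik.2, if_neg (by omega), sub_zero]
          have e3 : S3 f (j-p) = S3 g (j-p) := by
            rw [S3, S3]
            apply Finset.sum_congr rfl
            intro ik hik
            rw [Finset.HasAntidiagonal.mem_antidiagonal] at hik
            by_cases hik1 : ik.1 = 0
            · rw [hik1, h0, hgk 0, if_neg (show ¬(0 = j) by omega), sub_zero, h0]
              ring
            · rw [hgk ik.1, if_neg (by omega), sub_zero,
                hgk (ik.2+1+1), if_neg (by omega), sub_zero]
          rw [e1, e2, e3, h3g, hgk p, if_neg hpj, sub_zero, sub_self]
  have hsum : ∑ p ∈ Finset.range (j+1),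
        (((-1:A)^p * coeff p f) * (2 * S1 f (j-p) - 6 * coeff 3 f * S2 f (j-p) - S3 f (j-p))
        - ((-1:A)^p * coeff p g) * (2 * S1 g (j-p) - 6 * coeff 3 g * S2 g (j-p) - S3 g (j-p)))
      = -(2*(d*(((j-1:ℕ):A)+1) + d*(((j-1:ℕ):A)+1))
            - d * ((((j-2:ℕ):A)+1+1) * (((j-2:ℕ):A)+1)))
        + (-1:A)^j * d * 2 := by
    rw [Finset.sum_congr rfl key, Finset.sum_add_distrib,
      Finset.sum_ite_eq' (Finset.range (j+1)) 1, Finset.sum_ite_eq' (Finset.range (j+1)) j,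
      if_pos (Finset.mem_range.2 (by omega)), if_pos (Finset.mem_range.2 (by omega))]
  rw [Finset.sum_sub_distrib] at hsum
  have hgj : coeff j g = coeff j f - d := by rw [hgk j, if_pos rfl]
  have expand : (4 * ∑ p ∈ Finset.range (j+1),
        ((-1:A)^p * coeff p f) * (2 * S1 f (j-p) - 6 * coeff 3 f * S2 f (j-p) - S3 f (j-p))
      + 8 * coeff j f)
      - (4 * ∑ p ∈ Finset.range (j+1),
        ((-1:A)^p * coeff p g) * (2 * S1 g (j-p) - 6 * coeff 3 g * S2 g (j-p) - S3 g (j-p))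
      + 8 * coeff j g)
      = (8*(-1:A)^j + 4*(j:A)^2 - 20*(j:A) + 8) * d := by
    rw [hgj]
    have hc1 : ((j-1:ℕ):A) = (j:A) - 1 := by
      push_cast [Nat.cast_sub (show 1 ≤ j by omega)]; ring
    have hc2 : ((j-2:ℕ):A) = (j:A) - 2 := by
      push_cast [Nat.cast_sub (show 2 ≤ j by omega)]; ring
    rw [hc1, hc2] at hsum
    linear_combination (4:A) * hsum
  exact expand


set_option maxHeartbeats 2000000 in
theorem stmt14 (A : Type*) [CommRing A] [Algebra ℚ A]
    (b : ℕ → A) (f E : PowerSeries A)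
    (hE0 : PowerSeries.constantCoeff E = 1)
    (hE : PowerSeries.derivativeFun E =
      PowerSeries.derivativeFun (PowerSeries.mk fun n => if 2 ≤ n then b n else 0) * E)
    (hf : f = PowerSeries.X * E) :
    (∀ j, j ≤ 5 → PowerSeries.coeff j (DAt f) = 0) ∧
    PowerSeries.coeff 6 (DAt f) = -8 * (6 * b 2 * b 3 - 5 * b 5) ∧
    PowerSeries.coeff 7 (DAt f)
      = -(4 / 3 : ℚ) • (8 * b 2 ^ 3 + 24 * b 2 * b 4 + 27 * b 3 ^ 2 - 42 * b 6) ∧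
    (∀ j, 6 ≤ j → ∃ c : ℚ, c ≠ 0 ∧
      ∀ (b' : ℕ → A) (f' E' : PowerSeries A),
        PowerSeries.constantCoeff E' = 1 →
        PowerSeries.derivativeFun E' =
          PowerSeries.derivativeFun
            (PowerSeries.mk fun n => if 2 ≤ n then b' n else 0) * E' →
        f' = PowerSeries.X * E' →
        (∀ i, i ≠ j - 1 → b i = b' i) →
        PowerSeries.coeff j (DAt f) - PowerSeries.coeff j (DAt f')
          = c • (b (j - 1) - b' (j - 1))) ∧
    (DAt f = 0 →
      b 5 = (6 / 5 : ℚ) • (b 2 * b 3) ∧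
      b 6 = (1 / 42 : ℚ) • (8 * b 2 ^ 3 + 24 * b 2 * b 4 + 27 * b 3 ^ 2) ∧
      b 7 = (6 / 7 : ℚ) • (b 3 * (b 2 ^ 2 + b 4)) ∧
      b 8 = (1 / 21 : ℚ) • (b 2 ^ 4 + 10 * b 2 ^ 2 * b 4 + 27 * b 2 * b 3 ^ 2
        + 7 * b 4 ^ 2)) := by
  have hu0 : coeff 0 E = 1 := by rw [coeff_zero_eq_constantCoeff]; exact hE0
  have hf0 : coeff 0 f = 0 := by
    rw [hf, coeff_zero_eq_constantCoeff, map_mul, constantCoeff_X, zero_mul]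
  have hfc : ∀ k, coeff (k+1) f = coeff k E := by
    intro k; rw [hf, coeff_succ_X_mul]
  have hf1 : coeff 1 f = coeff 0 E := hfc 0
  have hf2 : coeff 2 f = coeff 1 E := hfc 1
  have hf3 : coeff 3 f = coeff 2 E := hfc 2
  have hf4 : coeff 4 f = coeff 3 E := hfc 3
  have hf5 : coeff 5 f = coeff 4 E := hfc 4
  have hf6 : coeff 6 f = coeff 5 E := hfc 5
  have hf7 : coeff 7 f = coeff 6 E := hfc 6
  have hf8 : coeff 8 f = coeff 7 E := hfc 7
  have hf9 : coeff 9 f = coeff 8 E := hfc 8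
  have hf10 : coeff 10 f = coeff 9 E := hfc 9
  have hf11 : coeff 11 f = coeff 10 E := hfc 10
  have hr1 : coeff 1 E * 1 = 0 := by
    have h := Ecoeff_rec b E hE 0
    simp only [Finset.sum_range_succ, Finset.sum_range_zero] at h
    norm_num at h
    try simp only [← coeff_zero_eq_constantCoeff_apply] at h
    linear_combination h
  have hr2 : coeff 2 E * 2 = b 2 * 2 * coeff 0 E := by
    have h := Ecoeff_rec b E hE 1
    simp only [Finset.sum_range_succ, Finset.sum_range_zero] at h
    norm_num at h
    try simp only [← coeff_zero_eq_constantCoeff_apply] at h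
    linear_combination h
  have hr3 : coeff 3 E * 3 = b 2 * 2 * coeff 1 E + b 3 * 3 * coeff 0 E := by
    have h := Ecoeff_rec b E hE 2
    simp only [Finset.sum_range_succ, Finset.sum_range_zero] at h
    norm_num at h
    try simp only [← coeff_zero_eq_constantCoeff_apply] at h
    linear_combination h
  have hr4 : coeff 4 E * 4 = b 2 * 2 * coeff 2 E + b 3 * 3 * coeff 1 E + b 4 * 4 * coeff 0 E := by
    have h := Ecoeff_rec b E hE 3
    simp only [Finset.sum_range_succ, Finset.sum_range_zero] at h
    norm_num at h
    try simp only [← coeff_zero_eq_constantCoeff_apply] at h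
    linear_combination h
  have hr5 : coeff 5 E * 5 = b 2 * 2 * coeff 3 E + b 3 * 3 * coeff 2 E + b 4 * 4 * coeff 1 E + b 5 * 5 * coeff 0 E := by
    have h := Ecoeff_rec b E hE 4
    simp only [Finset.sum_range_succ, Finset.sum_range_zero] at h
    norm_num at h
    try simp only [← coeff_zero_eq_constantCoeff_apply] at h
    linear_combination h
  have hr6 : coeff 6 E * 6 = b 2 * 2 * coeff 4 E + b 3 * 3 * coeff 3 E + b 4 * 4 * coeff 2 E + b 5 * 5 * coeff 1 E + b 6 * 6 * coeff 0 E := by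
    have h := Ecoeff_rec b E hE 5
    simp only [Finset.sum_range_succ, Finset.sum_range_zero] at h
    norm_num at h
    try simp only [← coeff_zero_eq_constantCoeff_apply] at h
    linear_combination h
  have hr7 : coeff 7 E * 7 = b 2 * 2 * coeff 5 E + b 3 * 3 * coeff 4 E + b 4 * 4 * coeff 3 E + b 5 * 5 * coeff 2 E + b 6 * 6 * coeff 1 E + b 7 * 7 * coeff 0 E := by
    have h := Ecoeff_rec b E hE 6
    simp only [Finset.sum_range_succ, Finset.sum_range_zero] at h
    norm_num at h
    try simp only [← coeff_zero_eq_constantCoeff_apply] at h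
    linear_combination h
  have hr8 : coeff 8 E * 8 = b 2 * 2 * coeff 6 E + b 3 * 3 * coeff 5 E + b 4 * 4 * coeff 4 E + b 5 * 5 * coeff 3 E + b 6 * 6 * coeff 2 E + b 7 * 7 * coeff 1 E + b 8 * 8 * coeff 0 E := by
    have h := Ecoeff_rec b E hE 7
    simp only [Finset.sum_range_succ, Finset.sum_range_zero] at h
    norm_num at h
    try simp only [← coeff_zero_eq_constantCoeff_apply] at h
    linear_combination h
  have hd0z : (1:A) * coeff 0 (DAt f) = 0 := by
    rw [coeff_DAt]
    simp only [Finset.Nat.sum_antidiagonal_eq_sum_range_succ_mk, S1, S2, S3,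
      Finset.sum_range_succ, Finset.sum_range_zero]
    norm_num [hf0, hf1, hf2, hf3, hf4, hf5, hf6, hf7, hf8, hf9, hf10, hf11]
    try simp only [← coeff_zero_eq_constantCoeff_apply]
    try linear_combination (0:A) * hu0
  have hd0 : coeff 0 (DAt f) = 0 := by
    refine qcancel 1 (by norm_num) ?_
    simp only [map_ofNat, map_one]
    linear_combination hd0z
  have hd1z : (1:A) * coeff 1 (DAt f) = 0 := by
    rw [coeff_DAt]
    simp only [Finset.Nat.sum_antidiagonal_eq_sum_range_succ_mk, S1, S2, S3,
      Finset.sum_range_succ, Finset.sum_range_zero]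
    norm_num [hf0, hf1, hf2, hf3, hf4, hf5, hf6, hf7, hf8, hf9, hf10, hf11]
    try simp only [← coeff_zero_eq_constantCoeff_apply]
    try linear_combination ((-8)*(coeff 0 E)*(coeff 0 E) + (-8)*(coeff 0 E)) * hu0
  have hd1 : coeff 1 (DAt f) = 0 := by
    refine qcancel 1 (by norm_num) ?_
    simp only [map_ofNat, map_one]
    linear_combination hd1z
  have hd2z : (1:A) * coeff 2 (DAt f) = 0 := by
    rw [coeff_DAt]
    simp only [Finset.Nat.sum_antidiagonal_eq_sum_range_succ_mk, S1, S2, S3,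
      Finset.sum_range_succ, Finset.sum_range_zero]
    norm_num [hf0, hf1, hf2, hf3, hf4, hf5, hf6, hf7, hf8, hf9, hf10, hf11]
    try simp only [← coeff_zero_eq_constantCoeff_apply]
    try linear_combination ((-16)*(coeff 0 E)*(coeff 0 E) + (8)) * hr1
  have hd2 : coeff 2 (DAt f) = 0 := by
    refine qcancel 1 (by norm_num) ?_
    simp only [map_ofNat, map_one]
    linear_combination hd2z
  have hd3z : (1:A) * coeff 3 (DAt f) = 0 := by
    rw [coeff_DAt]
    simp only [Finset.Nat.sum_antidiagonal_eq_sum_range_succ_mk, S1, S2, S3,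
      Finset.sum_range_succ, Finset.sum_range_zero]
    norm_num [hf0, hf1, hf2, hf3, hf4, hf5, hf6, hf7, hf8, hf9, hf10, hf11]
    try simp only [← coeff_zero_eq_constantCoeff_apply]
    try linear_combination ((12)*(coeff 0 E)*(coeff 0 E)*(coeff 0 E) + (-16)*(coeff 0 E)*(coeff 0 E) + (4)) * hr2 + ((24)*(coeff 0 E)*(coeff 0 E)*(coeff 0 E)*b 2 + (-8)*(coeff 0 E)*(coeff 0 E)*b 2 + (-8)*(coeff 0 E)*b 2) * hu0
  have hd3 : coeff 3 (DAt f) = 0 := by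
    refine qcancel 1 (by norm_num) ?_
    simp only [map_ofNat, map_one]
    linear_combination hd3z
  have hd4z : (3:A) * coeff 4 (DAt f) = 0 := by
    rw [coeff_DAt]
    simp only [Finset.Nat.sum_antidiagonal_eq_sum_range_succ_mk, S1, S2, S3,
      Finset.sum_range_succ, Finset.sum_range_zero]
    norm_num [hf0, hf1, hf2, hf3, hf4, hf5, hf6, hf7, hf8, hf9, hf10, hf11]
    try simp only [← coeff_zero_eq_constantCoeff_apply]
    try linear_combination ((-8)*(coeff 0 E)*(coeff 0 E) + (8)) * hr3 + ((36)*(coeff 0 E)*(coeff 0 E)*(coeff 1 E) + (-96)*(coeff 0 E)*(coeff 1 E)) * hr2 + ((72)*(coeff 0 E)*(coeff 0 E)*(coeff 0 E)*b 2 + (-208)*(coeff 0 E)*(coeff 0 E)*b 2 + (72)*(coeff 1 E)*(coeff 1 E) + (16)*b 2) * hr1 + ((-24)*(coeff 0 E)*(coeff 0 E)*b 3 + (-24)*(coeff 0 E)*b 3) * hu0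
  have hd4 : coeff 4 (DAt f) = 0 := by
    refine qcancel 3 (by norm_num) ?_
    simp only [map_ofNat, map_one]
    linear_combination hd4z
  have hd5z : (3:A) * coeff 5 (DAt f) = 0 := by
    rw [coeff_DAt]
    simp only [Finset.Nat.sum_antidiagonal_eq_sum_range_succ_mk, S1, S2, S3,
      Finset.sum_range_succ, Finset.sum_range_zero]
    norm_num [hf0, hf1, hf2, hf3, hf4, hf5, hf6, hf7, hf8, hf9, hf10, hf11]
    try simp only [← coeff_zero_eq_constantCoeff_apply]
    try linear_combination ((-6)*(coeff 0 E)*(coeff 0 E) + (6)) * hr4 + ((-32)*(coeff 0 E)*(coeff 1 E)) * hr3 + ((108)*(coeff 0 E)*(coeff 0 E)*(coeff 0 E)*b 2 + (108)*(coeff 0 E)*(coeff 0 E)*(coeff 2 E) + (-114)*(coeff 0 E)*(coeff 0 E)*b 2 + (-36)*(coeff 0 E)*(coeff 1 E)*(coeff 1 E) + (-108)*(coeff 0 E)*(coeff 2 E) + (60)*(coeff 1 E)*(coeff 1 E) + (6)*b 2) * hr2 + ((-72)*(coeff 0 E)*(coeff 0 E)*(coeff 1 E)*b 2 + (-114)*(coeff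 0 E)*(coeff 0 E)*b 3 + (56)*(coeff 0 E)*(coeff 1 E)*b 2 + (18)*b 3) * hr1 + ((216)*(coeff 0 E)*(coeff 0 E)*(coeff 0 E)*b 2*b 2 + (-12)*(coeff 0 E)*(coeff 0 E)*b 2*b 2 + (-24)*(coeff 0 E)*(coeff 0 E)*b 4 + (-12)*(coeff 0 E)*b 2*b 2 + (-24)*(coeff 0 E)*b 4) * hu0
  have hd5 : coeff 5 (DAt f) = 0 := by
    refine qcancel 3 (by norm_num) ?_
    simp only [map_ofNat, map_one]
    linear_combination hd5z
  have hd6z : (15:A) * coeff 6 (DAt f) = (-720)*b 2*b 3 + (600)*b 5 := by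
    rw [coeff_DAt]
    simp only [Finset.Nat.sum_antidiagonal_eq_sum_range_succ_mk, S1, S2, S3,
      Finset.sum_range_succ, Finset.sum_range_zero]
    norm_num [hf0, hf1, hf2, hf3, hf4, hf5, hf6, hf7, hf8, hf9, hf10, hf11]
    try simp only [← coeff_zero_eq_constantCoeff_apply]
    try linear_combination ((96)*(coeff 0 E)*(coeff 0 E) + (24)) * hr5 + ((-360)*(coeff 0 E)*(coeff 1 E)) * hr4 + ((120)*(coeff 0 E)*(coeff 0 E)*(coeff 2 E) + (64)*(coeff 0 E)*(coeff 0 E)*b 2 + (-560)*(coeff 0 E)*(coeff 2 E) + (480)*(coeff 1 E)*(coeff 1 E) + (16)*b 2) * hr3 + ((180)*(coeff 0 E)*(coeff 0 E)*(coeff 0 E)*b 3 + (480)*(coeff 0 E)*(coeff 0 E)*(coeff 1 E)*b 2 + (-696)*(coeff 0 E)*(coeff 0 E)*b 3 + (360)*(coeff 0 E)*(coeff 1 E)*(coeff 2 E) + (-1040)*(coeff 0 E)*(coeff 1 E)*b 2 + (-180)*(coeff 1 E)*(coeff 1 E)*(coeff 1 E) + (-120)*(coeff 1 E)*(coeff 2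 E) + (36)*b 3) * hr2 + ((960)*(coeff 0 E)*(coeff 0 E)*(coeff 0 E)*b 2*b 2 + (-1952)*(coeff 0 E)*(coeff 0 E)*b 2*b 2 + (-1056)*(coeff 0 E)*(coeff 0 E)*b 4 + (-360)*(coeff 0 E)*(coeff 1 E)*(coeff 1 E)*b 2 + (360)*(coeff 0 E)*(coeff 1 E)*b 3 + (960)*(coeff 1 E)*(coeff 1 E)*b 2 + (32)*b 2*b 2 + (96)*b 4) * hr1 + ((360)*(coeff 0 E)*(coeff 0 E)*(coeff 0 E)*b 2*b 3 + (-840)*(coeff 0 E)*(coeff 0 E)*b 2*b 3 + (480)*(coeff 0 E)*(coeff 0 E)*b 5 + (-840)*(coeff 0 E)*b 2*b 3 + (480)*(coeff 0 E)*b 5 + (-720)*b 2*b 3 + (600)*b 5) * hu0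
  have hd6 : coeff 6 (DAt f) = (-48)*b 2*b 3 + (40)*b 5 := by
    refine qcancel 15 (by norm_num) ?_
    simp only [map_ofNat, map_one]
    linear_combination hd6z
  have hd7z : (45:A) * coeff 7 (DAt f) = (-480)*b 2*b 2*b 2 + (-1440)*b 2*b 4 + (-1620)*b 3*b 3 + (2520)*b 6 := by
    rw [coeff_DAt]
    simp only [Finset.Nat.sum_antidiagonal_eq_sum_range_succ_mk, S1, S2, S3,
      Finset.sum_range_succ, Finset.sum_range_zero]
    norm_num [hf0, hf1, hf2, hf3, hf4, hf5, hf6, hf7, hf8, hf9, hf10, hf11]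
    try simp only [← coeff_zero_eq_constantCoeff_apply]
    try linear_combination ((360)*(coeff 0 E)*(coeff 0 E) + (60)) * hr6 + ((-576)*(coeff 0 E)*(coeff 1 E)) * hr5 + ((810)*(coeff 0 E)*(coeff 0 E)*(coeff 2 E) + (180)*(coeff 0 E)*(coeff 0 E)*b 2 + (-1800)*(coeff 0 E)*(coeff 2 E) + (540)*(coeff 1 E)*(coeff 1 E) + (30)*b 2) * hr4 + ((-600)*(coeff 0 E)*(coeff 0 E)*b 3 + (-720)*(coeff 0 E)*(coeff 1 E)*(coeff 2 E) + (-1024)*(coeff 0 E)*(coeff 1 E)*b 2 + (-960)*(coeff 0 E)*(coeff 3 E) + (1680)*(coeff 1 E)*(coeff 2 E) + (60)*b 3) * hr3 + ((2430)*(coeff 0 E)*(coeff 0 E)*(coeff 0 E)*b 2*b 2 + (1620)*(coeff 0 E)*(coeff 0 E)*(coeff 0 E)*b 4 + (135)*(coeff 0 E)*(coeff 0 E)*(coeff 1 E)*b 3 + (2430)*(coeff 0 E)*(coeff 0 E)*(coeff 2 E)*b 2 + (-2700)*(coeff 0 E)*(coeff 0 E)*b 2*b 2 + (-2880)*(coeff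 0 E)*(coeff 0 E)*b 4 + (-1260)*(coeff 0 E)*(coeff 1 E)*(coeff 1 E)*b 2 + (-1044)*(coeff 0 E)*(coeff 1 E)*b 3 + (1620)*(coeff 0 E)*(coeff 2 E)*(coeff 2 E) + (-2880)*(coeff 0 E)*(coeff 2 E)*b 2 + (-540)*(coeff 1 E)*(coeff 1 E)*(coeff 2 E) + (2220)*(coeff 1 E)*(coeff 1 E)*b 2 + (-1080)*(coeff 2 E)*(coeff 2 E) + (30)*b 2*b 2 + (120)*b 4) * hr2 + ((270)*(coeff 0 E)*(coeff 0 E)*(coeff 0 E)*b 2*b 3 + (-2520)*(coeff 0 E)*(coeff 0 E)*(coeff 1 E)*b 2*b 2 + (-5820)*(coeff 0 E)*(coeff 0 E)*b 2*b 3 + (-1080)*(coeff 0 E)*(coeff 0 E)*b 5 + (2392)*(coeff 0 E)*(coeff 1 E)*b 2*b 2 + (-144)*(coeff 0 E)*(coeff 1 E)*b 4 + (1620)*(coeff 1 E)*(coeff 1 E)*b 3 + (210)*b 2*b 3 + (300)*b 5) * hr1 + ((4860)*(coeff 0 E)*(coeff 0 E)*(coeff 0 E)*b 2*b 2*b 2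 + (3240)*(coeff 0 E)*(coeff 0 E)*(coeff 0 E)*b 2*b 4 + (-540)*(coeff 0 E)*(coeff 0 E)*b 2*b 2*b 2 + (-1800)*(coeff 0 E)*(coeff 0 E)*b 2*b 4 + (-1800)*(coeff 0 E)*(coeff 0 E)*b 3*b 3 + (2160)*(coeff 0 E)*(coeff 0 E)*b 6 + (-540)*(coeff 0 E)*b 2*b 2*b 2 + (-1800)*(coeff 0 E)*b 2*b 4 + (-1800)*(coeff 0 E)*b 3*b 3 + (2160)*(coeff 0 E)*b 6 + (-480)*b 2*b 2*b 2 + (-1440)*b 2*b 4 + (-1620)*b 3*b 3 + (2520)*b 6) * hu0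
  have hd7 : (3:A) * coeff 7 (DAt f) = (-32)*b 2*b 2*b 2 + (-96)*b 2*b 4 + (-108)*b 3*b 3 + (168)*b 6 := by
    refine qcancel 15 (by norm_num) ?_
    simp only [map_ofNat, map_one]
    linear_combination hd7z
  have hd8z : (315:A) * coeff 8 (DAt f) = (-45360)*b 2*b 2*b 3 + (12600)*b 2*b 5 + (-30240)*b 3*b 4 + (35280)*b 7 := by
    rw [coeff_DAt]
    simp only [Finset.Nat.sum_antidiagonal_eq_sum_range_succ_mk, S1, S2, S3,
      Finset.sum_range_succ, Finset.sum_range_zero]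
    norm_num [hf0, hf1, hf2, hf3, hf4, hf5, hf6, hf7, hf8, hf9, hf10, hf11]
    try simp only [← coeff_zero_eq_constantCoeff_apply]
    try linear_combination ((4680)*(coeff 0 E)*(coeff 0 E) + (360)) * hr7 + ((-6720)*(coeff 0 E)*(coeff 1 E)) * hr6 + ((1512)*(coeff 0 E)*(coeff 0 E)*(coeff 2 E) + (1872)*(coeff 0 E)*(coeff 0 E)*b 2 + (-6048)*(coeff 0 E)*(coeff 2 E) + (5544)*(coeff 1 E)*(coeff 1 E) + (144)*b 2) * hr5 + ((3510)*(coeff 0 E)*(coeff 0 E)*b 3 + (3780)*(coeff 0 E)*(coeff 1 E)*(coeff 2 E) + (-3360)*(coeff 0 E)*(coeff 1 E)*b 2 + (-16380)*(coeff 0 E)*(coeff 3 E) + (270)*b 3) * hr4 + ((1008)*(coeff 0 E)*(coeff 0 E)*(coeff 2 E)*b 2 + (1248)*(coeff 0 E)*(coeff 0 E)*b 2*b 2 + (-15600)*(coeff 0 E)*(coeff 0 E)*b 4 + (-7140)*(coeff 0 E)*(coeff 1 E)*b 3 + (5040)*(coeff 0 E)*(coeff 2 E)*(coeff 2 E) +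 (-14952)*(coeff 0 E)*(coeff 2 E)*b 2 + (-7560)*(coeff 1 E)*(coeff 1 E)*(coeff 2 E) + (14336)*(coeff 1 E)*(coeff 1 E)*b 2 + (15960)*(coeff 1 E)*(coeff 3 E) + (-7560)*(coeff 2 E)*(coeff 2 E) + (96)*b 2*b 2 + (480)*b 4) * hr3 + ((11340)*(coeff 0 E)*(coeff 0 E)*(coeff 0 E)*b 2*b 3 + (3780)*(coeff 0 E)*(coeff 0 E)*(coeff 0 E)*b 5 + (13608)*(coeff 0 E)*(coeff 0 E)*(coeff 1 E)*b 2*b 2 + (10584)*(coeff 0 E)*(coeff 0 E)*(coeff 1 E)*b 4 + (9828)*(coeff 0 E)*(coeff 0 E)*(coeff 2 E)*b 3 + (-36522)*(coeff 0 E)*(coeff 0 E)*b 2*b 3 + (-3420)*(coeff 0 E)*(coeff 0 E)*b 5 + (-5670)*(coeff 0 E)*(coeff 1 E)*(coeff 1 E)*b 3 + (12600)*(coeff 0 E)*(coeff 1 E)*(coeff 2 E)*b 2 + (-25872)*(coeff 0 E)*(coeff 1 E)*b 2*b 2 + (-25536)*(coeff 0 E)*(coeff 1 E)*b 4 + (-20412)*(coeff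 0 E)*(coeff 2 E)*b 3 + (-7560)*(coeff 1 E)*(coeff 1 E)*(coeff 1 E)*b 2 + (8316)*(coeff 1 E)*(coeff 1 E)*b 3 + (3780)*(coeff 1 E)*(coeff 2 E)*(coeff 2 E) + (-7560)*(coeff 1 E)*(coeff 2 E)*b 2 + (486)*b 2*b 3 + (900)*b 5) * hr2 + ((27216)*(coeff 0 E)*(coeff 0 E)*(coeff 0 E)*b 2*b 2*b 2 + (21168)*(coeff 0 E)*(coeff 0 E)*(coeff 0 E)*b 2*b 4 + (-11340)*(coeff 0 E)*(coeff 0 E)*(coeff 1 E)*b 2*b 3 + (-49248)*(coeff 0 E)*(coeff 0 E)*b 2*b 2*b 2 + (-88224)*(coeff 0 E)*(coeff 0 E)*b 2*b 4 + (-10890)*(coeff 0 E)*(coeff 0 E)*b 3*b 3 + (-12240)*(coeff 0 E)*(coeff 0 E)*b 6 + (-15120)*(coeff 0 E)*(coeff 1 E)*(coeff 1 E)*b 2*b 2 + (35280)*(coeff 0 E)*(coeff 1 E)*b 2*b 3 + (-5880)*(coeff 0 E)*(coeff 1 E)*b 5 + (28672)*(coeff 1 E)*(coeff 1 E)*b 2*b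 2 + (22176)*(coeff 1 E)*(coeff 1 E)*b 4 + (192)*b 2*b 2*b 2 + (1536)*b 2*b 4 + (810)*b 3*b 3 + (2160)*b 6) * hr1 + ((22680)*(coeff 0 E)*(coeff 0 E)*(coeff 0 E)*b 2*b 2*b 3 + (7560)*(coeff 0 E)*(coeff 0 E)*(coeff 0 E)*b 2*b 5 + (-46620)*(coeff 0 E)*(coeff 0 E)*b 2*b 2*b 3 + (10080)*(coeff 0 E)*(coeff 0 E)*b 2*b 5 + (-32760)*(coeff 0 E)*(coeff 0 E)*b 3*b 4 + (32760)*(coeff 0 E)*(coeff 0 E)*b 7 + (-46620)*(coeff 0 E)*b 2*b 2*b 3 + (10080)*(coeff 0 E)*b 2*b 5 + (-32760)*(coeff 0 E)*b 3*b 4 + (32760)*(coeff 0 E)*b 7 + (-45360)*b 2*b 2*b 3 + (12600)*b 2*b 5 + (-30240)*b 3*b 4 + (35280)*b 7) * hu0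
  have hd8 : coeff 8 (DAt f) = (-144)*b 2*b 2*b 3 + (40)*b 2*b 5 + (-96)*b 3*b 4 + (112)*b 7 := by
    refine qcancel 315 (by norm_num) ?_
    simp only [map_ofNat, map_one]
    linear_combination hd8z
  have hd9z : (630:A) * coeff 9 (DAt f) = (-16800)*b 2*b 2*b 2*b 2 + (-80640)*b 2*b 2*b 4 + (-98280)*b 2*b 3*b 3 + (65520)*b 2*b 6 + (-50400)*b 3*b 5 + (-30240)*b 4*b 4 + (90720)*b 8 := by
    rw [coeff_DAt]
    simp only [Finset.Nat.sum_antidiagonal_eq_sum_range_succ_mk, S1, S2, S3,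
      Finset.sum_range_succ, Finset.sum_range_zero]
    norm_num [hf0, hf1, hf2, hf3, hf4, hf5, hf6, hf7, hf8, hf9, hf10, hf11]
    try simp only [← coeff_zero_eq_constantCoeff_apply]
    try linear_combination ((10710)*(coeff 0 E)*(coeff 0 E) + (630)) * hr8 + ((-8640)*(coeff 0 E)*(coeff 1 E)) * hr7 + ((7560)*(coeff 0 E)*(coeff 0 E)*(coeff 2 E) + (3570)*(coeff 0 E)*(coeff 0 E)*b 2 + (-11760)*(coeff 0 E)*(coeff 2 E) + (2520)*(coeff 1 E)*(coeff 1 E) + (210)*b 2) * hr6 + ((6426)*(coeff 0 E)*(coeff 0 E)*b 3 + (-6048)*(coeff 0 E)*(coeff 1 E)*(coeff 2 E) + (-3456)*(coeff 0 E)*(coeff 1 E)*b 2 + (-28224)*(coeff 0 E)*(coeff 3 E) + (18144)*(coeff 1 E)*(coeff 2 E) + (378)*b 3) * hr5 + ((3780)*(coeff 0 E)*(coeff 0 E)*(coeff 2 E)*b 2 + (1785)*(coeff 0 E)*(coeff 0 E)*b 2*b 2 + (-8190)*(coeff 0 E)*(coeff 0 E)*b 4 + (-20655)*(coeff 0 E)*(coeff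 1 E)*b 3 + (22680)*(coeff 0 E)*(coeff 2 E)*(coeff 2 E) + (-15330)*(coeff 0 E)*(coeff 2 E)*b 2 + (-18900)*(coeff 0 E)*(coeff 4 E) + (-3780)*(coeff 1 E)*(coeff 1 E)*(coeff 2 E) + (1260)*(coeff 1 E)*(coeff 1 E)*b 2 + (30240)*(coeff 1 E)*(coeff 3 E) + (-28980)*(coeff 2 E)*(coeff 2 E) + (105)*b 2*b 2 + (630)*b 4) * hr4 + ((2520)*(coeff 0 E)*(coeff 0 E)*(coeff 2 E)*b 3 + (-10962)*(coeff 0 E)*(coeff 0 E)*b 2*b 3 + (-29190)*(coeff 0 E)*(coeff 0 E)*b 5 + (-7392)*(coeff 0 E)*(coeff 1 E)*(coeff 2 E)*b 2 + (-14848)*(coeff 0 E)*(coeff 1 E)*b 2*b 2 + (-8832)*(coeff 0 E)*(coeff 1 E)*b 4 + (-5040)*(coeff 0 E)*(coeff 2 E)*(coeff 3 E) + (-31584)*(coeff 0 E)*(coeff 2 E)*b 3 + (-18816)*(coeff 0 E)*(coeff 3 E)*b 2 + (32760)*(coeff 1 E)*(coeff 1 E)*b 3 + (-10080)*(coeff 1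 E)*(coeff 2 E)*(coeff 2 E) + (37856)*(coeff 1 E)*(coeff 2 E)*b 2 + (8400)*(coeff 2 E)*(coeff 3 E) + (462)*b 2*b 3 + (1050)*b 5) * hr3 + ((34020)*(coeff 0 E)*(coeff 0 E)*(coeff 0 E)*b 2*b 2*b 2 + (68040)*(coeff 0 E)*(coeff 0 E)*(coeff 0 E)*b 2*b 4 + (3780)*(coeff 0 E)*(coeff 0 E)*(coeff 0 E)*b 3*b 3 + (22680)*(coeff 0 E)*(coeff 0 E)*(coeff 0 E)*b 6 + (6930)*(coeff 0 E)*(coeff 0 E)*(coeff 1 E)*b 2*b 3 + (3780)*(coeff 0 E)*(coeff 0 E)*(coeff 1 E)*b 5 + (34020)*(coeff 0 E)*(coeff 0 E)*(coeff 2 E)*b 2*b 2 + (60480)*(coeff 0 E)*(coeff 0 E)*(coeff 2 E)*b 4 + (-42525)*(coeff 0 E)*(coeff 0 E)*b 2*b 2*b 2 + (-113190)*(coeff 0 E)*(coeff 0 E)*b 2*b 4 + (-37737)*(coeff 0 E)*(coeff 0 E)*b 3*b 3 + (-3150)*(coeff 0 E)*(coeff 0 E)*b 6 + (-21252)*(coeff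 0 E)*(coeff 1 E)*(coeff 1 E)*b 2*b 2 + (-19656)*(coeff 0 E)*(coeff 1 E)*(coeff 1 E)*b 4 + (9828)*(coeff 0 E)*(coeff 1 E)*(coeff 2 E)*b 3 + (-39888)*(coeff 0 E)*(coeff 1 E)*b 2*b 3 + (-5640)*(coeff 0 E)*(coeff 1 E)*b 5 + (30240)*(coeff 0 E)*(coeff 2 E)*(coeff 2 E)*b 2 + (-44310)*(coeff 0 E)*(coeff 2 E)*b 2*b 2 + (-81480)*(coeff 0 E)*(coeff 2 E)*b 4 + (-5670)*(coeff 1 E)*(coeff 1 E)*(coeff 1 E)*b 3 + (-13860)*(coeff 1 E)*(coeff 1 E)*(coeff 2 E)*b 2 + (39116)*(coeff 1 E)*(coeff 1 E)*b 2*b 2 + (41328)*(coeff 1 E)*(coeff 1 E)*b 4 + (-16254)*(coeff 1 E)*(coeff 2 E)*b 3 + (7560)*(coeff 2 E)*(coeff 2 E)*(coeff 2 E) + (-28980)*(coeff 2 E)*(coeff 2 E)*b 2 + (105)*b 2*b 2*b 2 + (1050)*b 2*b 4 + (567)*b 3*b 3 + (1890)*b 6) * hr2 + ((13860)*(coeff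 0 E)*(coeff 0 E)*(coeff 0 E)*b 2*b 2*b 3 + (7560)*(coeff 0 E)*(coeff 0 E)*(coeff 0 E)*b 2*b 5 + (-42504)*(coeff 0 E)*(coeff 0 E)*(coeff 1 E)*b 2*b 2*b 2 + (-39312)*(coeff 0 E)*(coeff 0 E)*(coeff 1 E)*b 2*b 4 + (-140889)*(coeff 0 E)*(coeff 0 E)*b 2*b 2*b 3 + (-69090)*(coeff 0 E)*(coeff 0 E)*b 2*b 5 + (-107982)*(coeff 0 E)*(coeff 0 E)*b 3*b 4 + (14490)*(coeff 0 E)*(coeff 0 E)*b 7 + (-11340)*(coeff 0 E)*(coeff 1 E)*(coeff 1 E)*b 2*b 3 + (48536)*(coeff 0 E)*(coeff 1 E)*b 2*b 2*b 2 + (56208)*(coeff 0 E)*(coeff 1 E)*b 2*b 4 + (36315)*(coeff 0 E)*(coeff 1 E)*b 3*b 3 + (-36720)*(coeff 0 E)*(coeff 1 E)*b 6 + (69300)*(coeff 1 E)*(coeff 1 E)*b 2*b 3 + (12600)*(coeff 1 E)*(coeff 1 E)*b 5 + (1239)*b 2*b 2*b 3 + (3150)*b 2*b 5 + (3402)*b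 3*b 4 + (4410)*b 7) * hr1 + ((68040)*(coeff 0 E)*(coeff 0 E)*(coeff 0 E)*b 2*b 2*b 2*b 2 + (136080)*(coeff 0 E)*(coeff 0 E)*(coeff 0 E)*b 2*b 2*b 4 + (7560)*(coeff 0 E)*(coeff 0 E)*(coeff 0 E)*b 2*b 3*b 3 + (45360)*(coeff 0 E)*(coeff 0 E)*(coeff 0 E)*b 2*b 6 + (-17010)*(coeff 0 E)*(coeff 0 E)*b 2*b 2*b 2*b 2 + (-83160)*(coeff 0 E)*(coeff 0 E)*b 2*b 2*b 4 + (-100800)*(coeff 0 E)*(coeff 0 E)*b 2*b 3*b 3 + (60480)*(coeff 0 E)*(coeff 0 E)*b 2*b 6 + (-55440)*(coeff 0 E)*(coeff 0 E)*b 3*b 5 + (-32760)*(coeff 0 E)*(coeff 0 E)*b 4*b 4 + (85680)*(coeff 0 E)*(coeff 0 E)*b 8 + (-17010)*(coeff 0 E)*b 2*b 2*b 2*b 2 + (-83160)*(coeff 0 E)*b 2*b 2*b 4 + (-100800)*(coeff 0 E)*b 2*b 3*b 3 + (60480)*(coeff 0 E)*b 2*b 6 + (-55440)*(coeff 0 E)*b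 3*b 5 + (-32760)*(coeff 0 E)*b 4*b 4 + (85680)*(coeff 0 E)*b 8 + (-16800)*b 2*b 2*b 2*b 2 + (-80640)*b 2*b 2*b 4 + (-98280)*b 2*b 3*b 3 + (65520)*b 2*b 6 + (-50400)*b 3*b 5 + (-30240)*b 4*b 4 + (90720)*b 8) * hu0
  have hd9 : (3:A) * coeff 9 (DAt f) = (-80)*b 2*b 2*b 2*b 2 + (-384)*b 2*b 2*b 4 + (-468)*b 2*b 3*b 3 + (312)*b 2*b 6 + (-240)*b 3*b 5 + (-144)*b 4*b 4 + (432)*b 8 := by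
    refine qcancel 210 (by norm_num) ?_
    simp only [map_ofNat, map_one]
    linear_combination hd9z
  refine ⟨?_, ?_, ?_, ?_, ?_⟩
  · intro j hj
    interval_cases j
    exacts [hd0, hd1, hd2, hd3, hd4, hd5]
  · linear_combination hd6
  · refine qsolve 3 (-4) (-(4 / 3 : ℚ)) (by norm_num) (by norm_num) ?_
    simp only [map_ofNat, map_neg]
    linear_combination hd7
  · -- general j
    intro j hj
    refine ⟨8*(-1:ℚ)^j + 4*(j:ℚ)^2 - 20*(j:ℚ) + 8, ?_, ?_⟩
    · have hc : (6:ℚ) ≤ (j:ℚ) := by exact_mod_cast hj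
      rcases Nat.even_or_odd j with he | ho
      · rw [he.neg_one_pow]; nlinarith
      · rw [ho.neg_one_pow]; nlinarith
    · intro b' f' E' hE0' hE' hf' hbag
      have hu0' : coeff 0 E' = 1 := by rw [coeff_zero_eq_constantCoeff]; exact hE0'
      have keylt : ∀ k, k < j - 1 → coeff k E' = coeff k E := by
        intro k
        induction k using Nat.strong_induction_on with
        | _ k IH =>
          intro hk
          match k, hk with
          | 0, _ => rw [hu0', hu0]
          | (m+1), hk =>
            have e1 := Ecoeff_rec b' E' hE' m
            have e2 := Ecoeff_rec b E hE m
            have hsums : ∑ i ∈ Finset.range (m+1),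
                ((if 2 ≤ i+1 then b' (i+1) else 0) * ((i:A)+1)) * coeff (m-i) E'
                = ∑ i ∈ Finset.range (m+1),
                ((if 2 ≤ i+1 then b (i+1) else 0) * ((i:A)+1)) * coeff (m-i) E := by
              apply Finset.sum_congr rfl
              intro i hi
              rw [Finset.mem_range] at hi
              have hb : b' (i+1) = b (i+1) := (hbag (i+1) (by omega)).symm
              have hEi : coeff (m-i) E' = coeff (m-i) E := IH (m-i) (by omega) (by omega)
              by_cases h2 : 2 ≤ i+1
              · rw [if_pos h2, if_pos h2, hb, hEi]
              · rw [if_neg h2, if_neg h2, hEi]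
            exact succ_cancel m (by rw [e1, hsums, ← e2])
      have keyJ : coeff (j-1) E' = coeff (j-1) E + (b' (j-1) - b (j-1)) := by
        have hm : j - 2 + 1 = j - 1 := by omega
        have e1 := Ecoeff_rec b' E' hE' (j-2)
        have e2 := Ecoeff_rec b E hE (j-2)
        rw [hm] at e1 e2
        have hdiff : ∑ i ∈ Finset.range (j-1),
              ((if 2 ≤ i+1 then b' (i+1) else 0) * ((i:A)+1)) * coeff (j-2-i) E'
            - ∑ i ∈ Finset.range (j-1),
              ((if 2 ≤ i+1 then b (i+1) else 0) * ((i:A)+1)) * coeff (j-2-i) E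
            = (b' (j-1) - b (j-1)) * (((j-2:ℕ):A)+1) := by
          rw [← Finset.sum_sub_distrib]
          refine range_sum_eq_single (j-1) (j-2) _ _ (by omega) ?_ ?_
          · rw [show j-2-(j-2) = 0 from by omega, if_pos (show 2 ≤ j-2+1 by omega),
              if_pos (show 2 ≤ j-2+1 by omega), hu0', hu0, hm]
            ring
          · intro i hi hine
            have hEi : coeff (j-2-i) E' = coeff (j-2-i) E := keylt _ (by omega)
            have hb : b' (i+1) = b (i+1) := (hbag (i+1) (by omega)).symm
            by_cases h2 : 2 ≤ i+1
            · rw [if_pos h2, if_pos h2, hb, hEi]; ring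
            · rw [if_neg h2, if_neg h2, hEi]; ring
        refine succ_cancel (j-2) ?_
        linear_combination e1 - e2 + hdiff
      have hff1 : coeff 1 f = 1 := by rw [hf1, hu0]
      have hf'0 : coeff 0 f' = 0 := by
        rw [hf', coeff_zero_eq_constantCoeff, map_mul, constantCoeff_X, zero_mul]
      set dd := b (j-1) - b' (j-1) with hdd
      have hgf' : ∀ k, k ≤ j →
          coeff k (f - PowerSeries.C dd * PowerSeries.X ^ j) = coeff k f' := by
        intro k hk
        have hgk : coeff k (f - PowerSeries.C dd * PowerSeries.X ^ j)
            = coeff k f - (if k = j then dd else 0) := by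
          rw [map_sub, coeff_C_mul, coeff_X_pow, mul_ite, mul_one, mul_zero]
        rw [hgk]
        match k, hk with
        | 0, _ => rw [if_neg (by omega), sub_zero, hf0, hf'0]
        | (m+1), hk =>
          rw [hf', coeff_succ_X_mul, hfc m]
          by_cases hkj : m+1 = j
          · have hmj : m = j - 1 := by omega
            rw [if_pos hkj, hmj, keyJ, hdd]
            ring
          · rw [if_neg hkj, sub_zero]
            exact (keylt m (by omega)).symm
      have hcongr : coeff j (DAt (f - PowerSeries.C dd * PowerSeries.X ^ j))
          = coeff j (DAt f') := by
        refine coeff_DAt_congr _ _ j (by omega) ?_ hgf'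
        rw [hgf' 0 (by omega), hf'0]
      have hdiff2 := coeff_DAt_sub f dd j hj hf0 hff1
      rw [← hcongr, hdiff2, Algebra.smul_def]
      have hcast : algebraMap ℚ A (8*(-1:ℚ)^j + 4*(j:ℚ)^2 - 20*(j:ℚ) + 8)
          = 8*(-1:A)^j + 4*(j:A)^2 - 20*(j:A) + 8 := by
        simp only [map_add, map_sub, map_mul, map_pow, map_neg, map_one, map_ofNat,
          map_natCast]
      rw [hcast]
  · intro hD0
    rw [hD0, map_zero] at hd6
    have hz6 := hd6
    rw [hD0, map_zero, mul_zero] at hd7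
    have hz7 := hd7
    rw [hD0, map_zero] at hd8
    have hz8 := hd8
    rw [hD0, map_zero, mul_zero] at hd9
    have hz9 := hd9
    have hb5 : b 5 = (6 / 5 : ℚ) • (b 2 * b 3) := by
      refine qsolve 40 48 (6 / 5 : ℚ) (by norm_num) (by norm_num) ?_
      simp only [map_ofNat, map_one]
      linear_combination ((-1)) * hz6
    have hb6 : b 6 = (1 / 42 : ℚ) • (8 * b 2 ^ 3 + 24 * b 2 * b 4 + 27 * b 3 ^ 2) := by
      refine qsolve 168 4 (1 / 42 : ℚ) (by norm_num) (by norm_num) ?_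
      simp only [map_ofNat, map_one]
      linear_combination ((-1)) * hz7
    have hb7 : b 7 = (6 / 7 : ℚ) • (b 3 * (b 2 ^ 2 + b 4)) := by
      refine qsolve 112 96 (6 / 7 : ℚ) (by norm_num) (by norm_num) ?_
      simp only [map_ofNat, map_one]
      linear_combination ((-1)) * hz8 + (b 2) * hz6
    have hb8 : b 8 = (1 / 21 : ℚ) • (b 2 ^ 4 + 10 * b 2 ^ 2 * b 4 + 27 * b 2 * b 3 ^ 2 + 7 * b 4 ^ 2) := by
      refine qsolve 3024 144 (1 / 21 : ℚ) (by norm_num) (by norm_num) ?_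
      simp only [map_ofNat, map_one]
      linear_combination ((-7)) * hz9 + ((13)*b 2) * hz7 + ((-42)*b 3) * hz6
    exact ⟨hb5, hb6, hb7, hb8⟩
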